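/- The Thue–Morse sequence t is not eventually periodic: there exist no period p ≥ 1 and threshold N such that t(n + p) = t(n) for all n ≥ N. In particular, the infinite word ABBABAAB… generated by the L-system cannot be divided into periods. -/

import Mathlib

/-- The Thue–Morse sequence: `t n` is the parity of the number of `1` digits
in the binary expansion of `n` (so `t 0 = 0`, `t (2n) = t n`, `t (2n+1) = 1 - t n`). -/
def thueMorse (n : ℕ) : Fin 2 := Fin.ofNat 2 (Nat.digits 2 n).sum

/-!
If `p` were an eventual period of `t`, then so would be `p / 2` for even `p`, since `t (2n) = t n`;
halving down to the odd part of `p` leaves an odd period `2a + 1`. Comparing the shifts of `2n`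
and `2n + 1` by `2a + 1` then forces `t (n + 1) = t n` for all large `n`, which fails at every
even `n` because `t (2n + 1) = t (2n) + 1`.
-/

theorem thueMorse_two_mul (n : ℕ) : thueMorse (2 * n) = thueMorse n := by
  rcases Nat.eq_zero_or_pos n with rfl | hn
  · rfl
  · have hdigits := Nat.digits_add 2 one_lt_two 0 n two_pos (.inr hn.ne')
    rw [zero_add] at hdigits
    simp [thueMorse, hdigits]

theorem thueMorse_two_mul_add_one (n : ℕ) : thueMorse (2 * n + 1) = thueMorse n + 1 := by
  rw [add_comm, thueMorse, Nat.digits_add 2 one_lt_two 1 n one_lt_two (.inl one_ne_zero),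
    List.sum_cons, thueMorse]
  ext
  simp only [Fin.val_ofNat, Fin.val_add, Fin.val_one]
  omega

theorem thueMorse_two_mul_add_one_ne (n : ℕ) : thueMorse (2 * n + 1) ≠ thueMorse (2 * n) := by
  rw [thueMorse_two_mul_add_one, thueMorse_two_mul]
  generalize thueMorse n = x
  revert x
  decide

theorem eventually_periodic_of_two_pow_mul {α : Type*} {f : ℕ → α} (hf : ∀ n, f (2 * n) = f n)
    {N p : ℕ} (k : ℕ) (h : ∀ n ≥ N, f (n + 2 ^ k * p) = f n) : ∀ n ≥ N, f (n + p) = f n := by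
  induction k with
  | zero => simpa using h
  | succ k ih =>
    refine ih fun n hn => ?_
    have h2n := h (2 * n) (by omega)
    rwa [pow_succ', mul_assoc, ← mul_add, hf, hf] at h2n

theorem thueMorse_not_eventually_periodic_odd (N a : ℕ) :
    ¬ ∀ n ≥ N, thueMorse (n + (2 * a + 1)) = thueMorse n := by
  intro h
  have shift_even (n : ℕ) (hn : N ≤ n) : thueMorse (n + a) + 1 = thueMorse n := by
    have := h (2 * n) (by omega)
    rwa [show 2 * n + (2 * a + 1) = 2 * (n + a) + 1 by ring, thueMorse_two_mul_add_one,
      thueMorse_two_mul] at this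
  have shift_odd (n : ℕ) (hn : N ≤ n) : thueMorse (n + a + 1) = thueMorse n + 1 := by
    have := h (2 * n + 1) (by omega)
    rwa [show 2 * n + 1 + (2 * a + 1) = 2 * (n + a + 1) by ring, thueMorse_two_mul,
      thueMorse_two_mul_add_one] at this
  apply thueMorse_two_mul_add_one_ne N
  have := shift_even (2 * N + 1) (by omega)
  rw [show 2 * N + 1 + a = 2 * N + a + 1 by ring, shift_odd (2 * N) (by omega), add_assoc] at this
  simpa [show (1 + 1 : Fin 2) = 0 from rfl] using this.symm

/-- The Thue–Morse sequence is not eventually periodic: there are no period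
`p ≥ 1` and threshold `N` such that `t (n + p) = t n` for all `n ≥ N`.  In
particular, the infinite word `ABBABAAB…` generated by the L-system cannot be
divided into periods. -/
theorem thueMorse_not_eventually_periodic :
    ¬ ∃ p : ℕ, 1 ≤ p ∧ ∃ N : ℕ, ∀ n ≥ N, thueMorse (n + p) = thueMorse n := by
  rintro ⟨p, hp, N, hper⟩
  obtain ⟨k, _, ⟨a, rfl⟩, rfl⟩ := Nat.exists_eq_two_pow_mul_odd (n := p) (by omega)
  exact thueMorse_not_eventually_periodic_odd N a
    (eventually_periodic_of_two_pow_mul thueMorse_two_mul k hper)
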